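/- Folding preserves connectedness: with Φ simply laced, σ a Dynkin diagram automorphism (no vertex adjacent to its image), and Φ' the folded root system in V^σ, if a σ-invariant weight λ is connected with respect to Φ' (its Φ'-firing span is all of V^σ) then λ is connected with respect to Φ (its Φ-firing span is all of V). -/

import Mathlib

open scoped RealInnerProductSpace

noncomputable section

namespace CF

variable {V : Type*} [NormedAddCommGroup V] [InnerProductSpace ℝ V]

/-- The coroot `α∨ = 2α/⟨α,α⟩`. -/
def coroot (α : V) : V := (2 / ⟪α, α⟫) • α

/-- A reduced crystallographic root system in `V`. -/
def IsRootSystem (Φ : Set V) : Prop :=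
  Φ.Finite ∧ (0 : V) ∉ Φ ∧ Submodule.span ℝ Φ = ⊤ ∧
    (∀ α ∈ Φ, ∀ β ∈ Φ, β - ⟪β, coroot α⟫ • α ∈ Φ) ∧
    (∀ α ∈ Φ, ∀ t : ℝ, t • α ∈ Φ → t = 1 ∨ t = -1) ∧
    (∀ α ∈ Φ, ∀ β ∈ Φ, ∃ n : ℤ, ⟪β, coroot α⟫ = (n : ℝ))

/-- A choice of positive roots `Φ⁺ ⊆ Φ` (exactly one of `±α` is positive, and the positive
roots lie strictly on one side of a hyperplane). -/
def IsPositiveSystem (Φ Φp : Set V) : Prop :=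
  Φp ⊆ Φ ∧ (∀ α ∈ Φ, (α ∈ Φp ∨ -α ∈ Φp) ∧ ¬(α ∈ Φp ∧ -α ∈ Φp)) ∧
    ∃ ℓ : V →ₗ[ℝ] ℝ, ∀ α ∈ Φp, 0 < ℓ α

/-- The weight lattice `P = {v : ⟨v, α∨⟩ ∈ ℤ for all α ∈ Φ}`. -/
def weightLattice (Φ : Set V) : Set V :=
  {v | ∀ α ∈ Φ, ∃ n : ℤ, ⟪v, coroot α⟫ = (n : ℝ)}

/-- Central-firing: `λ → λ + α` whenever `α ∈ Φ⁺` and `⟨λ, α∨⟩ = 0`. -/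
def fire (Φp : Set V) (lam mu : V) : Prop :=
  ∃ α ∈ Φp, ⟪lam, coroot α⟫ = 0 ∧ mu = lam + α

/-- The Weyl group: the group of linear isometries generated by the reflections `s_α`, `α ∈ Φ`. -/
def weylGroup (Φ : Set V) : Subgroup (V ≃ₗᵢ[ℝ] V) :=
  Subgroup.closure {g | ∃ α ∈ Φ, ∀ v, g v = v - ⟪v, coroot α⟫ • α}

/-- `v` and `w` lie in the same Weyl group orbit. -/
def sameOrbit (Φ : Set V) (v w : V) : Prop := ∃ g ∈ weylGroup Φ, g v = w

def weylOrbit (Φ : Set V) (v : V) : Set V := {w | sameOrbit Φ v w}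

/-- The root lattice `Q`. -/
def rootLattice (Φ : Set V) : AddSubgroup V := AddSubgroup.closure Φ

/-- `Π^Q(λ)`: the points of the permutohedron `Π(λ) = ConvexHull(Wλ)` lying in `λ + Q`. -/
def permQ (Φ : Set V) (lam : V) : Set V :=
  {mu | mu ∈ convexHull ℝ (weylOrbit Φ lam) ∧ lam - mu ∈ rootLattice Φ}

def IsDominant (Δ : Set V) (lam : V) : Prop := ∀ a ∈ Δ, 0 ≤ ⟪lam, coroot a⟫

def IsStrictlyDominant (Δ : Set V) (lam : V) : Prop := ∀ a ∈ Δ, 0 < ⟪lam, coroot a⟫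

/-- A minuscule weight: a nonzero dominant weight whose `Π^Q` consists of its Weyl orbit. -/
def IsMinuscule (Φ Δ : Set V) (w : V) : Prop :=
  w ≠ 0 ∧ IsDominant Δ w ∧ ∀ mu ∈ permQ Φ w, sameOrbit Φ w mu

/-- `Δ` is a system of simple roots for the positive system `Φ⁺`. -/
def IsSimpleSystem (Φp : Set V) (Δ : Finset V) : Prop :=
  (Δ : Set V) ⊆ Φp ∧ LinearIndependent ℝ (fun a : (Δ : Set V) => (a : V)) ∧
    ∀ α ∈ Φp, ∃ c : V → ℝ, (∀ a ∈ Δ, 0 ≤ c a) ∧ α = ∑ a ∈ Δ, c a • a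

def IsSimplyLaced (Φ : Set V) : Prop := ∀ α ∈ Φ, ∀ β ∈ Φ, ⟪α, α⟫ = ⟪β, β⟫

/-- Irreducibility: `Φ` cannot be split into two nonempty mutually orthogonal parts. -/
def IsIrreducibleRS (Φ : Set V) : Prop :=
  ¬ ∃ S T : Set V, S.Nonempty ∧ T.Nonempty ∧ S ∪ T = Φ ∧ ∀ a ∈ S, ∀ b ∈ T, ⟪a, b⟫ = 0

/-- The firing span `FS_S(λ) = Span_ℝ{μ − λ : λ →* μ}`. -/
def firingSpan (Φp : Set V) (lam : V) : Submodule ℝ V :=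
  Submodule.span ℝ {d | ∃ mu, Relation.ReflTransGen (fire Φp) lam mu ∧ d = mu - lam}

/-- Central-firing on Weyl orbits: `Wλ → Wμ` iff some representatives fire. -/
def ofire (Φ Φp : Set V) (lam mu : V) : Prop :=
  ∃ lam' mu', sameOrbit Φ lam lam' ∧ sameOrbit Φ mu mu' ∧ fire Φp lam' mu'

/-- Connectivity of roots within a subset `Ψ` (via non-orthogonality). -/
def sameComponent (Ψ : Set V) (β γ : V) : Prop :=
  Relation.ReflTransGen (fun x y => x ∈ Ψ ∧ y ∈ Ψ ∧ ⟪x, y⟫ ≠ 0) β γ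

/-- Confluence of central-firing from `λ`: all maximal firing sequences from `λ`
terminate at the same weight. -/
def ConfluentFrom (S : Set V) (lam : V) : Prop :=
  ∀ mu₁ mu₂ : V, Relation.ReflTransGen (fire S) lam mu₁ → (¬ ∃ ν, fire S mu₁ ν) →
    Relation.ReflTransGen (fire S) lam mu₂ → (¬ ∃ ν, fire S mu₂ ν) → mu₁ = mu₂

/-- `β` is a positive root of the folded root system: the sum of a `σ`-orbit `B` of
pairwise orthogonal positive roots of `Φ`. -/
def IsFoldedPosRoot (σ : V ≃ₗᵢ[ℝ] V) (Φp : Set V) (β : V) : Prop :=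
  ∃ B : Finset V, (B : Set V) ⊆ Φp ∧ B.Nonempty ∧
    (∀ γ ∈ B, σ γ ∈ B) ∧
    (∀ γ ∈ B, ∀ δ ∈ B, ∃ k : ℕ, (fun v => σ v)^[k] γ = δ) ∧
    (∀ γ ∈ B, ∀ δ ∈ B, γ ≠ δ → ⟪γ, δ⟫ = 0) ∧
    β = ∑ γ ∈ B, γ

/-! If the `Φ`-firing span `U` of `λ` were proper, some root `δ ∉ U` would have `⟪λ, δ⟫ ≠ 0`,
and we may take `⟪λ, δ⟫ > 0`. Since `Φ` is simply laced, firing a root `γ ∈ U` moves the integer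
`⟪x, δ∨⟫` by at least `-1`, and it can never reach `0` (that would put `δ` into `U`); so for roots
outside `U` the sign of `⟪x, δ⟫` is the same at every weight `x` reachable from `λ`. Hence the
finite set `G` of roots outside `U` pairing positively with `λ` is permuted by `σ` and by the
reflections in all fired roots, so `ξ = ∑ G` is `σ`-fixed and orthogonal to `U`, while
`⟪λ, ξ⟫ > 0`. Every `Φ'`-firing is a sequence of `Φ`-firings of mutually orthogonal roots, so the
`Φ'`-firing span `V^σ` lies in `U`; thus `ξ ∈ U ∩ Uᗮ = 0`, a contradiction. -/

open Relation

lemma _root_.Finset.sum_comp_eq_of_mapsTo {α M : Type*} [AddCommMonoid M] {s : Finset α}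
    {g : α → α} (hg : Set.MapsTo g s s) (hinj : Set.InjOn g s) (f : α → M) :
    ∑ a ∈ s, f (g a) = ∑ a ∈ s, f a :=
  Finset.sum_nbij g hg hinj (Finset.surjOn_of_injOn_of_card_le g hg hinj le_rfl) fun _ _ => rfl

lemma mapsTo_symm_of_finite (τ : V ≃ₗᵢ[ℝ] V) {s : Set V} (hs : s.Finite) (hτ : Set.MapsTo τ s s) :
    Set.MapsTo τ.symm s s := by
  intro a ha
  obtain ⟨b, hb, rfl⟩ := ((hs.injOn_iff_bijOn_of_mapsTo hτ).1 τ.injective.injOn).surjOn ha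
  simpa using hb

section Coroot

variable {α : V}

lemma two_div_inner_self_pos (hα : α ≠ 0) : 0 < 2 / ⟪α, α⟫ :=
  div_pos two_pos (real_inner_self_pos.2 hα)

lemma inner_coroot (x α : V) : ⟪x, coroot α⟫ = 2 / ⟪α, α⟫ * ⟪x, α⟫ :=
  real_inner_smul_right x α _

lemma inner_coroot_eq_zero_iff (hα : α ≠ 0) (x : V) : ⟪x, coroot α⟫ = 0 ↔ ⟪x, α⟫ = 0 := by
  rw [inner_coroot, mul_eq_zero, or_iff_right (two_div_inner_self_pos hα).ne']

lemma inner_coroot_pos_iff (hα : α ≠ 0) (x : V) : 0 < ⟪x, coroot α⟫ ↔ 0 < ⟪x, α⟫ := by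
  rw [inner_coroot]
  exact mul_pos_iff_of_pos_left (two_div_inner_self_pos hα)

lemma inner_coroot_self (hα : α ≠ 0) : ⟪α, coroot α⟫ = 2 := by
  rw [inner_coroot, div_mul_cancel₀ _ (real_inner_self_pos.2 hα).ne']

lemma coroot_neg (α : V) : coroot (-α) = -coroot α := by
  simp [coroot]

lemma coroot_map (τ : V ≃ₗᵢ[ℝ] V) (v : V) : coroot (τ v) = τ (coroot v) := by
  rw [coroot, coroot, τ.inner_map_map, map_smul]

def reflect (α v : V) : V := v - ⟪v, coroot α⟫ • α

lemma inner_reflect_coroot (hα : α ≠ 0) (v : V) :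
    ⟪reflect α v, coroot α⟫ = -⟪v, coroot α⟫ := by
  rw [reflect, inner_sub_left, real_inner_smul_left, inner_coroot_self hα]
  ring

lemma reflect_involutive (hα : α ≠ 0) : Function.Involutive (reflect α) := by
  intro v
  rw [reflect, inner_reflect_coroot hα, reflect, neg_smul, sub_neg_eq_add, sub_add_cancel]

lemma inner_reflect_of_inner_eq_zero {x : V} (hx : ⟪x, α⟫ = 0) (v : V) :
    ⟪x, reflect α v⟫ = ⟪x, v⟫ := by
  rw [reflect, inner_sub_right, real_inner_smul_right, hx, mul_zero, sub_zero]

end Coroot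

namespace IsRootSystem

variable {Φ : Set V} {α β : V}

lemma ne_zero (hΦ : IsRootSystem Φ) (hα : α ∈ Φ) : α ≠ 0 :=
  fun h => hΦ.2.1 (h ▸ hα)

lemma reflect_mem (hΦ : IsRootSystem Φ) (hα : α ∈ Φ) (hβ : β ∈ Φ) : reflect α β ∈ Φ :=
  hΦ.2.2.2.1 α hα β hβ

lemma neg_mem (hΦ : IsRootSystem Φ) (hα : α ∈ Φ) : -α ∈ Φ := by
  have h := hΦ.reflect_mem hα hα
  rwa [reflect, inner_coroot_self (hΦ.ne_zero hα), two_smul, sub_add_cancel_left] at h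

lemma exists_int_inner_coroot (hΦ : IsRootSystem Φ) (hα : α ∈ Φ) (hβ : β ∈ Φ) :
    ∃ n : ℤ, ⟪β, coroot α⟫ = n :=
  hΦ.2.2.2.2.2 α hα β hβ

lemma neg_two_lt_inner_coroot (hΦ : IsRootSystem Φ) (hsl : IsSimplyLaced Φ) (hα : α ∈ Φ)
    (hβ : β ∈ Φ) (hne : β ≠ -α) : -2 < ⟪β, coroot α⟫ := by
  have hα₀ : 0 < ⟪α, α⟫ := real_inner_self_pos.2 (hΦ.ne_zero hα)
  have hsum : 0 < ⟪β + α, β + α⟫ :=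
    real_inner_self_pos.2 fun h => hne (eq_neg_of_add_eq_zero_left h)
  rw [real_inner_add_add_self, hsl β hβ α hα] at hsum
  rw [inner_coroot, div_mul_eq_mul_div, lt_div_iff₀ hα₀]
  linarith

end IsRootSystem

section Firing

variable {Φ P : Set V} {lam x : V}

lemma sub_mem_firingSpan {mu : V} (h : ReflTransGen (fire P) lam mu) :
    mu - lam ∈ firingSpan P lam :=
  Submodule.subset_span ⟨mu, h, rfl⟩

lemma mem_firingSpan_of_fire {γ : V} (hx : ReflTransGen (fire P) lam x) (hγ : γ ∈ P)
    (h0 : ⟪x, coroot γ⟫ = 0) : γ ∈ firingSpan P lam := by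
  simpa using sub_mem (sub_mem_firingSpan (hx.tail ⟨γ, hγ, h0, rfl⟩)) (sub_mem_firingSpan hx)

lemma mem_firingSpan_of_inner_coroot_eq_zero (hp : IsPositiveSystem Φ P) {δ : V} (hδ : δ ∈ Φ)
    (hx : ReflTransGen (fire P) lam x) (h0 : ⟪x, coroot δ⟫ = 0) : δ ∈ firingSpan P lam := by
  rcases (hp.2.1 δ hδ).1 with h | h
  · exact mem_firingSpan_of_fire hx h h0
  · have h0' : ⟪x, coroot (-δ)⟫ = 0 := by rw [coroot_neg, inner_neg_right, h0, neg_zero]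
    simpa using neg_mem (mem_firingSpan_of_fire hx h h0')

lemma firingSpan_le_orthogonal {ξ : V}
    (h : ∀ γ ∈ P, ∀ x, ReflTransGen (fire P) lam x → ⟪x, coroot γ⟫ = 0 → ⟪γ, ξ⟫ = 0) :
    firingSpan P lam ≤ (ℝ ∙ ξ)ᗮ := by
  refine Submodule.span_le.2 ?_
  rintro _ ⟨mu, hmu, rfl⟩
  rw [SetLike.mem_coe, Submodule.mem_orthogonal_singleton_iff_inner_left]
  induction hmu with
  | refl => simp
  | @tail b c hb hbc ih =>
    obtain ⟨γ, hγ, h0, rfl⟩ := hbc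
    rw [add_sub_right_comm, inner_add_left, ih, h γ hγ b hb h0, add_zero]

lemma reach_map (τ : V ≃ₗᵢ[ℝ] V) (hτl : τ lam = lam) (hτP : Set.MapsTo τ P P)
    (hx : ReflTransGen (fire P) lam x) : ReflTransGen (fire P) lam (τ x) := by
  induction hx with
  | refl => rw [hτl]
  | @tail b c _ hbc ih =>
    obtain ⟨γ, hγ, h0, rfl⟩ := hbc
    refine ih.tail ⟨τ γ, hτP hγ, ?_, map_add τ b γ⟩
    rw [coroot_map, τ.inner_map_map, h0]

lemma map_mem_firingSpan (τ : V ≃ₗᵢ[ℝ] V) (hτl : τ lam = lam) (hτP : Set.MapsTo τ P P)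
    {u : V} (hu : u ∈ firingSpan P lam) : τ u ∈ firingSpan P lam := by
  have hle : (firingSpan P lam).map τ.toLinearEquiv.toLinearMap ≤ firingSpan P lam := by
    refine (Submodule.map_span_le _ _ _).2 ?_
    rintro _ ⟨mu, hmu, rfl⟩
    simpa [hτl] using sub_mem_firingSpan (reach_map τ hτl hτP hmu)
  exact hle (Submodule.mem_map_of_mem hu)

lemma mem_weightLattice_of_reach (hΦ : IsRootSystem Φ) (hPΦ : P ⊆ Φ)
    (hlam : lam ∈ weightLattice Φ) (hx : ReflTransGen (fire P) lam x) : x ∈ weightLattice Φ := by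
  induction hx with
  | refl => exact hlam
  | @tail b c _ hbc ih =>
    obtain ⟨γ, hγ, -, rfl⟩ := hbc
    intro δ hδ
    obtain ⟨n, hn⟩ := ih δ hδ
    obtain ⟨m, hm⟩ := hΦ.exists_int_inner_coroot hδ (hPΦ hγ)
    exact ⟨n + m, by rw [inner_add_left, hn, hm]; push_cast; ring⟩

end Firing

section Sign

variable {Φ P : Set V} {lam x δ : V}

/-- Simply lacedness is what prevents a single firing from jumping over `0`. -/
lemma inner_coroot_pos_of_reach (hΦ : IsRootSystem Φ) (hp : IsPositiveSystem Φ P)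
    (hsl : IsSimplyLaced Φ) (hlam : lam ∈ weightLattice Φ) (hδ : δ ∈ Φ)
    (hδU : δ ∉ firingSpan P lam) (hpos : 0 < ⟪lam, coroot δ⟫)
    (hx : ReflTransGen (fire P) lam x) : 0 < ⟪x, coroot δ⟫ := by
  induction hx with
  | refl => exact hpos
  | @tail b c hb hbc ih =>
    obtain ⟨γ, hγ, h0, rfl⟩ := hbc
    have hγδ : γ ≠ -δ := by
      rintro rfl
      simpa using hδU (neg_mem_iff.1 (mem_firingSpan_of_fire hb hγ h0))
    obtain ⟨n, hn⟩ := mem_weightLattice_of_reach hΦ hp.1 hlam hb δ hδ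
    obtain ⟨m, hm⟩ := hΦ.exists_int_inner_coroot hδ (hp.1 hγ)
    have hm2 : -2 < m := by
      have := hΦ.neg_two_lt_inner_coroot hsl hδ (hp.1 hγ) hγδ
      rw [hm] at this
      exact_mod_cast this
    have hn0 : 0 < n := by
      rw [hn] at ih
      exact_mod_cast ih
    have hne : ⟪b + γ, coroot δ⟫ ≠ 0 := fun h =>
      hδU (mem_firingSpan_of_inner_coroot_eq_zero hp hδ (hb.tail ⟨γ, hγ, h0, rfl⟩) h)
    rw [inner_add_left, hn, hm] at hne ⊢
    have hnm : n + m ≠ 0 := by exact_mod_cast hne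
    exact_mod_cast (by omega : 0 < n + m)

lemma inner_pos_iff_of_reach (hΦ : IsRootSystem Φ) (hp : IsPositiveSystem Φ P)
    (hsl : IsSimplyLaced Φ) (hlam : lam ∈ weightLattice Φ) (hδ : δ ∈ Φ)
    (hδU : δ ∉ firingSpan P lam) (hx : ReflTransGen (fire P) lam x) :
    0 < ⟪x, δ⟫ ↔ 0 < ⟪lam, δ⟫ := by
  have key : ∀ ε ∈ Φ, ε ∉ firingSpan P lam → 0 < ⟪lam, ε⟫ → 0 < ⟪x, ε⟫ := fun ε hε hεU h => by
    rw [← inner_coroot_pos_iff (hΦ.ne_zero hε)] at h ⊢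
    exact inner_coroot_pos_of_reach hΦ hp hsl hlam hε hεU h hx
  refine ⟨fun hxδ => ?_, key δ hδ hδU⟩
  have hne : ⟪lam, δ⟫ ≠ 0 := fun h => hδU <| mem_firingSpan_of_inner_coroot_eq_zero hp hδ
    ReflTransGen.refl ((inner_coroot_eq_zero_iff (hΦ.ne_zero hδ) lam).2 h)
  by_contra hneg
  have := key (-δ) (hΦ.neg_mem hδ) (fun h => hδU (neg_mem_iff.1 h))
    (by rw [inner_neg_right]; exact neg_pos.2 (lt_of_le_of_ne (not_lt.1 hneg) hne))
  rw [inner_neg_right] at this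
  linarith

end Sign

section OffSpanRoots

variable {Φ P : Set V} {lam δ : V}

def offSpanRoots (Φ P : Set V) (lam : V) : Set V :=
  {δ | δ ∈ Φ ∧ δ ∉ firingSpan P lam ∧ 0 < ⟪lam, δ⟫}

lemma offSpanRoots_nonempty (hΦ : IsRootSystem Φ) (hp : IsPositiveSystem Φ P)
    (hU : firingSpan P lam ≠ ⊤) : (offSpanRoots Φ P lam).Nonempty := by
  obtain ⟨δ, hδ, hδU⟩ : ∃ δ ∈ Φ, δ ∉ firingSpan P lam := by
    by_contra! h
    exact hU (top_le_iff.1 (hΦ.2.2.1 ▸ Submodule.span_le.2 h))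
  have hne : ⟪lam, δ⟫ ≠ 0 := fun h => hδU <| mem_firingSpan_of_inner_coroot_eq_zero hp hδ
    ReflTransGen.refl ((inner_coroot_eq_zero_iff (hΦ.ne_zero hδ) lam).2 h)
  rcases hne.lt_or_gt with hneg | hpos
  · refine ⟨-δ, hΦ.neg_mem hδ, fun h => hδU (neg_mem_iff.1 h), ?_⟩
    rwa [inner_neg_right, neg_pos]
  · exact ⟨δ, hδ, hδU, hpos⟩

lemma map_mem_offSpanRoots (hΦ : IsRootSystem Φ) (hp : IsPositiveSystem Φ P)
    {σ : V ≃ₗᵢ[ℝ] V} (hσΦ : Set.MapsTo σ Φ Φ) (hσP : Set.MapsTo σ P P) (hσlam : σ lam = lam)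
    (hδ : δ ∈ offSpanRoots Φ P lam) : σ δ ∈ offSpanRoots Φ P lam := by
  obtain ⟨hδΦ, hδU, hpos⟩ := hδ
  have hσP' : Set.MapsTo σ.symm P P := mapsTo_symm_of_finite σ (hΦ.1.subset hp.1) hσP
  have hσlam' : σ.symm lam = lam := by rw [σ.symm_apply_eq, hσlam]
  refine ⟨hσΦ hδΦ, fun h => hδU ?_, ?_⟩
  · simpa using map_mem_firingSpan σ.symm hσlam' hσP' h
  · rwa [← hσlam, σ.inner_map_map]

lemma reflect_mem_offSpanRoots (hΦ : IsRootSystem Φ) (hp : IsPositiveSystem Φ P)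
    (hsl : IsSimplyLaced Φ) (hlam : lam ∈ weightLattice Φ) {γ x : V} (hγ : γ ∈ P)
    (hx : ReflTransGen (fire P) lam x) (h0 : ⟪x, coroot γ⟫ = 0)
    (hδ : δ ∈ offSpanRoots Φ P lam) : reflect γ δ ∈ offSpanRoots Φ P lam := by
  obtain ⟨hδΦ, hδU, hpos⟩ := hδ
  have hγU : γ ∈ firingSpan P lam := mem_firingSpan_of_fire hx hγ h0
  have hsΦ : reflect γ δ ∈ Φ := hΦ.reflect_mem (hp.1 hγ) hδΦ
  have hsU : reflect γ δ ∉ firingSpan P lam := fun h =>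
    hδU (by simpa [reflect] using add_mem h (Submodule.smul_mem _ ⟪δ, coroot γ⟫ hγU))
  have hxγ : ⟪x, γ⟫ = 0 := (inner_coroot_eq_zero_iff (hΦ.ne_zero (hp.1 hγ)) x).1 h0
  refine ⟨hsΦ, hsU, (inner_pos_iff_of_reach hΦ hp hsl hlam hsΦ hsU hx).1 ?_⟩
  rw [inner_reflect_of_inner_eq_zero hxγ]
  exact (inner_pos_iff_of_reach hΦ hp hsl hlam hδΦ hδU hx).2 hpos

/-- The witness is `ξ = ∑ offSpanRoots`; each reflection in a fired root permutes
`offSpanRoots`, which forces `⟪ξ, γ∨⟫ = -⟪ξ, γ∨⟫`. -/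
theorem exists_fixed_orthogonal_firingSpan (hΦ : IsRootSystem Φ) (hp : IsPositiveSystem Φ P)
    (hsl : IsSimplyLaced Φ) {σ : V ≃ₗᵢ[ℝ] V} (hσΦ : Set.MapsTo σ Φ Φ)
    (hσP : Set.MapsTo σ P P) (hlam : lam ∈ weightLattice Φ) (hσlam : σ lam = lam)
    (hU : firingSpan P lam ≠ ⊤) :
    ∃ ξ : V, σ ξ = ξ ∧ 0 < ⟪lam, ξ⟫ ∧ firingSpan P lam ≤ (ℝ ∙ ξ)ᗮ := by
  have hfin : (offSpanRoots Φ P lam).Finite := hΦ.1.subset fun _ h => h.1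
  set G := hfin.toFinset
  have hG : ∀ {δ}, δ ∈ G ↔ δ ∈ offSpanRoots Φ P lam := hfin.mem_toFinset
  refine ⟨∑ δ ∈ G, δ, ?_, ?_, firingSpan_le_orthogonal fun γ hγ x hx h0 => ?_⟩
  · rw [map_sum]
    exact Finset.sum_comp_eq_of_mapsTo
      (fun δ hδ => hG.2 (map_mem_offSpanRoots hΦ hp hσΦ hσP hσlam (hG.1 hδ)))
      σ.injective.injOn id
  · rw [inner_sum]
    exact Finset.sum_pos (fun δ hδ => (hG.1 hδ).2.2)
      (hfin.toFinset_nonempty.2 (offSpanRoots_nonempty hΦ hp hU))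
  · have hγ₀ : γ ≠ 0 := hΦ.ne_zero (hp.1 hγ)
    have hsum := Finset.sum_comp_eq_of_mapsTo
      (fun δ hδ => hG.2 (reflect_mem_offSpanRoots hΦ hp hsl hlam hγ hx h0 (hG.1 hδ)))
      (reflect_involutive hγ₀).injective.injOn (fun v => ⟪v, coroot γ⟫)
    simp only [inner_reflect_coroot hγ₀, Finset.sum_neg_distrib] at hsum
    rw [real_inner_comm, ← inner_coroot_eq_zero_iff hγ₀, sum_inner]
    linarith

end OffSpanRoots

section Folding

variable {P : Set V} {σ : V ≃ₗᵢ[ℝ] V} {lam : V}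

lemma reach_add_sum_of_pairwise_orthogonal {B : Finset V} (hBP : (B : Set V) ⊆ P)
    (hB : (B : Set V).Pairwise fun γ δ => ⟪γ, δ⟫ = 0) {mu : V} (hmu : ∀ γ ∈ B, ⟪mu, γ⟫ = 0) :
    ReflTransGen (fire P) mu (mu + ∑ γ ∈ B, γ) := by
  classical
  induction B using Finset.induction_on generalizing mu with
  | empty => simpa using ReflTransGen.refl
  | @insert a B ha ih =>
    rw [Finset.coe_insert, Set.insert_subset_iff] at hBP
    rw [Finset.coe_insert, Set.pairwise_insert] at hB
    have hfire : fire P mu (mu + a) :=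
      ⟨a, hBP.1, by rw [inner_coroot, hmu a (Finset.mem_insert_self a B), mul_zero], rfl⟩
    have hrest := ih hBP.2 hB.1 (mu := mu + a) fun γ hγ => by
      rw [inner_add_left, hmu γ (Finset.mem_insert_of_mem hγ),
        (hB.2 γ hγ fun h => ha (h ▸ hγ)).1, add_zero]
    rw [Finset.sum_insert ha, ← add_assoc]
    exact ReflTransGen.head hfire hrest

lemma inner_iterate_of_fixed {b : V} (hb : σ b = b) (k : ℕ) (v : V) :
    ⟪b, (fun v => σ v)^[k] v⟫ = ⟪b, v⟫ := by
  induction k generalizing v with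
  | zero => rfl
  | succ k ih => rw [Function.iterate_succ_apply, ih, ← σ.inner_map_map b v, hb]

/-- One firing of the folded root `∑ B` at a `σ`-fixed weight fires each `γ ∈ B` in turn,
since `σ`-invariance forces all `⟪b, γ⟫` to be equal, hence `0`. -/
lemma reach_of_fire_folded {b c : V} (hb : σ b = b)
    (h : fire {β | IsFoldedPosRoot σ P β} b c) : ReflTransGen (fire P) b c ∧ σ c = c := by
  obtain ⟨_, ⟨B, hBP, ⟨γ₀, hγ₀⟩, hBσ, hBorb, hBorth, rfl⟩, h0, rfl⟩ := h
  have hσβ : σ (∑ γ ∈ B, γ) = ∑ γ ∈ B, γ := by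
    rw [map_sum]
    exact Finset.sum_comp_eq_of_mapsTo hBσ σ.injective.injOn id
  refine ⟨?_, by rw [map_add, hb, hσβ]⟩
  by_cases hβ : ∑ γ ∈ B, γ = 0
  · rw [hβ, add_zero]
  have hconst : ∀ γ ∈ B, ⟪b, γ⟫ = ⟪b, γ₀⟫ := fun γ hγ => by
    obtain ⟨k, rfl⟩ := hBorb γ₀ hγ₀ γ hγ
    exact inner_iterate_of_fixed hb k γ₀
  have hbβ := (inner_coroot_eq_zero_iff hβ b).1 h0
  rw [inner_sum, Finset.sum_congr rfl hconst, Finset.sum_const, nsmul_eq_mul] at hbβ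
  have hbγ₀ : ⟪b, γ₀⟫ = 0 :=
    (mul_eq_zero.1 hbβ).resolve_left (by exact_mod_cast (Finset.card_pos.2 ⟨γ₀, hγ₀⟩).ne')
  exact reach_add_sum_of_pairwise_orthogonal hBP hBorth fun γ hγ => (hconst γ hγ).trans hbγ₀

lemma reach_of_reach_folded (hσlam : σ lam = lam) {mu : V}
    (h : ReflTransGen (fire {β | IsFoldedPosRoot σ P β}) lam mu) :
    ReflTransGen (fire P) lam mu ∧ σ mu = mu := by
  induction h with
  | refl => exact ⟨ReflTransGen.refl, hσlam⟩
  | tail _ hbc ih =>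
    obtain ⟨hreach, hfix⟩ := reach_of_fire_folded ih.2 hbc
    exact ⟨ih.1.trans hreach, hfix⟩

lemma firingSpan_folded_le (hσlam : σ lam = lam) :
    firingSpan {β | IsFoldedPosRoot σ P β} lam ≤ firingSpan P lam := by
  refine Submodule.span_le.2 ?_
  rintro _ ⟨mu, hmu, rfl⟩
  exact sub_mem_firingSpan (reach_of_reach_folded hσlam hmu).1

end Folding

theorem folding_connected_general (Φ Φp : Finset V)
    (hΦ : IsRootSystem (Φ : Set V)) (hp : IsPositiveSystem (Φ : Set V) (Φp : Set V))
    (hsl : IsSimplyLaced (Φ : Set V))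
    (σ : V ≃ₗᵢ[ℝ] V)
    (hσΦ : ∀ α ∈ Φ, σ α ∈ Φ) (hσp : ∀ α ∈ Φp, σ α ∈ Φp)
    (lam : V) (hlam : lam ∈ weightLattice (Φ : Set V)) (hσlam : σ lam = lam)
    (hconn' : firingSpan {β | IsFoldedPosRoot σ (Φp : Set V) β} lam =
      LinearMap.eqLocus σ.toLinearEquiv.toLinearMap LinearMap.id) :
    firingSpan (Φp : Set V) lam = ⊤ := by
  by_contra hU
  obtain ⟨ξ, hσξ, hpos, hperp⟩ :=
    exists_fixed_orthogonal_firingSpan hΦ hp hsl hσΦ hσp hlam hσlam hU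
  have hξU : ξ ∈ firingSpan (Φp : Set V) lam :=
    firingSpan_folded_le hσlam (hconn' ▸ LinearMap.mem_eqLocus.2 hσξ)
  have hξ : ξ = 0 :=
    (inner_self_eq_zero (𝕜 := ℝ)).1 (Submodule.mem_orthogonal_singleton_iff_inner_left.1 (hperp hξU))
  rw [hξ, inner_zero_right] at hpos
  exact lt_irrefl 0 hpos

/-- folding preserves connectedness.  If the `σ`-invariant weight `λ` is
connected with respect to the folded system `Φ'` (its `Φ'`-firing span is all of
`V^σ = {v : σv = v}`), then `λ` is connected with respect to `Φ`. -/
theorem folding_connected (Φ Φp Δ : Finset V)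
    (hΦ : IsRootSystem (Φ : Set V)) (hp : IsPositiveSystem (Φ : Set V) (Φp : Set V))
    (hΔ : IsSimpleSystem (Φp : Set V) Δ) (hsl : IsSimplyLaced (Φ : Set V))
    (σ : V ≃ₗᵢ[ℝ] V)
    (hσΦ : ∀ α ∈ Φ, σ α ∈ Φ) (hσp : ∀ α ∈ Φp, σ α ∈ Φp) (hσΔ : ∀ a ∈ Δ, σ a ∈ Δ)
    (hadj : ∀ a ∈ Δ, ∀ k : ℕ, (fun v => σ v)^[k] a ≠ a → ⟪a, (fun v => σ v)^[k] a⟫ = 0)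
    (lam : V) (hlam : lam ∈ weightLattice (Φ : Set V)) (hσlam : σ lam = lam)
    (hconn' : firingSpan {β | IsFoldedPosRoot σ (Φp : Set V) β} lam =
      LinearMap.eqLocus σ.toLinearEquiv.toLinearMap LinearMap.id) :
    firingSpan (Φp : Set V) lam = ⊤ :=
  folding_connected_general Φ Φp hΦ hp hsl σ hσΦ hσp lam hlam hσlam hconn'

end CF
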